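/- Let Σ be a finite alphabet and let x and y be nonempty words over Σ. Then each of the languages L_{x<y} = {z ∈ Σ* : |z|_x < |z|_y}, L_{x≤y} = {z ∈ Σ* : |z|_x ≤ |z|_y}, L_{x=y} = {z ∈ Σ* : |z|_x = |z|_y}, and their complements L_{x≥y}, L_{x>y}, L_{x≠y} is a context-free language. -/

import Mathlib

/-- Number of (possibly overlapping) occurrences of `x` as a contiguous
subword (factor) of `z`. -/
def occCount {α : Type*} [DecidableEq α] (x z : List α) : ℕ :=
  ((List.range (z.length + 1)).filter (fun i => decide (x <+: z.drop i))).length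

/-- `wpow w n` is the word `w` concatenated with itself `n` times. -/
def wpow {α : Type*} (w : List α) (n : ℕ) : List α := (List.replicate n w).flatten

/-- `z` is `y`-bordered: `z ≠ y` and `y` is both a prefix and a suffix of `z`. -/
def IsBordered {α : Type*} (y z : List α) : Prop := z ≠ y ∧ y <+: z ∧ y <:+ z

/-- `x` is interlaced by `y`: `y` is a subword (factor) of every `x`-bordered word. -/
def InterlacedBy {α : Type*} (x y : List α) : Prop :=
  ∀ z : List α, IsBordered x z → y <:+: z

/-!
Counting occurrences by their starting position, `|z|_y - |z|_x` is the total weight of a run of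
a finite automaton that reads `z` from right to left, remembers the next `max |x| |y|` letters,
and gives each transition a weight in `{-1, 0, 1}`. For any such weighted automaton, the words
of total weight `0` between two given states form a Dyck-like language, generated by splitting a
word where its running weight first returns to `0`; a word of positive weight splits where the
running weight first steps from `0` to `1`. This yields a context-free grammar for each sign
condition on the total weight, and context-free languages are closed under reversal.
-/

namespace Symbol

variable {T N : Type*}

def language (f : N → Language T) : Symbol T N → Language T
  | terminal a => {[a]}
  | nonterminal n => f n

def listLanguage (f : N → Language T) (u : List (Symbol T N)) : Language T :=
  (u.map (Symbol.language f)).prod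

variable (f : N → Language T)

@[simp] lemma listLanguage_nil : listLanguage f [] = 1 := rfl

@[simp] lemma listLanguage_cons (x : Symbol T N) (u : List (Symbol T N)) :
    listLanguage f (x :: u) = x.language f * listLanguage f u := by
  simp [listLanguage]

lemma listLanguage_append (u v : List (Symbol T N)) :
    listLanguage f (u ++ v) = listLanguage f u * listLanguage f v := by
  simp [listLanguage]

lemma mem_listLanguage_map_terminal (z : List T) :
    z ∈ listLanguage f (z.map terminal) := by
  induction z with
  | nil => exact (Language.mem_one _).2 rfl
  | cons a z ih => exact Language.mem_mul.2 ⟨[a], rfl, z, ih, rfl⟩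

end Symbol

namespace ContextFreeGrammar

variable {T : Type*} {g : ContextFreeGrammar T}

lemma Derives.append {u₁ u₂ v₁ v₂ : List (Symbol T g.NT)} (h₁ : g.Derives u₁ v₁)
    (h₂ : g.Derives u₂ v₂) : g.Derives (u₁ ++ u₂) (v₁ ++ v₂) :=
  (h₁.append_right u₂).trans (h₂.append_left v₁)

lemma Derives.listLanguage_le {f : g.NT → Language T}
    (hf : ∀ r ∈ g.rules, Symbol.listLanguage f r.output ≤ f r.input)
    {u v : List (Symbol T g.NT)} (h : g.Derives u v) :
    Symbol.listLanguage f v ≤ Symbol.listLanguage f u := by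
  induction h with
  | refl => exact le_rfl
  | tail _ huv ih =>
    obtain ⟨r, hr, hrw⟩ := huv
    obtain ⟨p, q, rfl, rfl⟩ := hrw.exists_parts
    refine le_trans ?_ ih
    simp only [Symbol.listLanguage_append, Symbol.listLanguage_cons, Symbol.language,
      Symbol.listLanguage_nil, mul_one]
    gcongr
    exact hf r hr

lemma language_le_of_rules {f : g.NT → Language T}
    (hf : ∀ r ∈ g.rules, Symbol.listLanguage f r.output ≤ f r.input) :
    g.language ≤ f g.initial := fun z hz => by
  simpa [Symbol.language] using
    hz.listLanguage_le hf (Symbol.mem_listLanguage_map_terminal f z)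

end ContextFreeGrammar

section WeightedAutomaton

variable {S T : Type*} (step : S → T → S) (w : S → T → ℤ)

def weightFrom : S → List T → ℤ
  | _, [] => 0
  | s, a :: z => w s a + weightFrom (step s a) z

@[simp] lemma weightFrom_nil (s : S) : weightFrom step w s [] = 0 := rfl

@[simp] lemma weightFrom_cons (s : S) (a : T) (z : List T) :
    weightFrom step w s (a :: z) = w s a + weightFrom step w (step s a) z := rfl

@[simp] lemma weightFrom_append (s : S) (u v : List T) :
    weightFrom step w s (u ++ v) =
      weightFrom step w s u + weightFrom step w (u.foldl step s) v := by
  induction u generalizing s with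
  | nil => simp
  | cons a u ih => simp [ih, add_assoc]

lemma weightFrom_mul_left (c : ℤ) (s : S) (z : List T) :
    weightFrom step (fun s a => c * w s a) s z = c * weightFrom step w s z := by
  induction z generalizing s with
  | nil => simp
  | cons a z ih => simp [ih, mul_add]

variable {step w}

/-- The running weight moves by at most one per letter, so on its way from `0` to `k` it steps
from `k - 1` to `k` somewhere. -/
lemma exists_eq_append_cons_of_le_weightFrom (hw : ∀ s a, |w s a| ≤ 1) {k : ℤ} (hk : 1 ≤ k)
    {s : S} {z : List T} (h : k ≤ weightFrom step w s z) :
    ∃ u a v, z = u ++ a :: v ∧ weightFrom step w s u = k - 1 ∧ w (u.foldl step s) a = 1 := by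
  induction z generalizing s k with
  | nil => simp at h; omega
  | cons b z ih =>
    have hb := abs_le.1 (hw s b)
    rw [weightFrom_cons] at h
    by_cases hstop : k = 1 ∧ w s b = 1
    · exact ⟨[], b, z, rfl, by simp [hstop.1], hstop.2⟩
    · obtain ⟨u, a, v, rfl, hu, ha⟩ :=
        ih (k := k - w s b) (s := step s b) (by omega) (by omega)
      exact ⟨b :: u, a, v, rfl, by rw [weightFrom_cons, hu]; ring, ha⟩

lemma exists_eq_append_cons_of_pos (hw : ∀ s a, |w s a| ≤ 1) (ε : ℤˣ) {s : S} {z : List T}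
    (h : 0 < ε * weightFrom step w s z) :
    ∃ u a v, z = u ++ a :: v ∧ weightFrom step w s u = 0 ∧ ε * w (u.foldl step s) a = 1 := by
  have hεw : ∀ s a, |ε * w s a| ≤ 1 := fun s a => by
    simpa [abs_mul, Int.isUnit_iff_abs_eq.1 ε.isUnit] using hw s a
  rw [← weightFrom_mul_left] at h
  obtain ⟨u, a, v, rfl, hu, ha⟩ := exists_eq_append_cons_of_le_weightFrom hεw le_rfl h
  refine ⟨u, a, v, rfl, ?_, ha⟩
  rw [weightFrom_mul_left] at hu
  simpa using hu

end WeightedAutomaton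

namespace CounterGrammar

/- The sign `ε = ±1` lets one family of nonterminals handle both `0 ≤ weight` and
`weight ≤ 0`. -/
inductive Nonterminal (S : Type) where
  | bal (s t : S)
  | nonneg (ε : ℤˣ) (s : S)
  | pos (ε : ℤˣ) (s : S)
  | zero (s : S)
  | nonzero (s : S)
deriving DecidableEq

inductive RuleLabel (S T : Type) where
  | balNil (s : S)
  | balSkip (s t : S) (a : T)
  | balPair (s r t : S) (a b : T)
  | nonnegBal (ε : ℤˣ) (s t : S)
  | nonnegPos (ε : ℤˣ) (s : S)
  | posStep (ε : ℤˣ) (s t : S) (a : T)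
  | zeroBal (s t : S)
  | nonzeroPos (ε : ℤˣ) (s : S)
deriving Fintype

open Symbol Nonterminal RuleLabel

variable {S T : Type} (step : S → T → S) (w : S → T → ℤ)

def RuleLabel.rule : RuleLabel S T → ContextFreeRule T (Nonterminal S)
  | balNil s => ⟨bal s s, []⟩
  | balSkip s t a => ⟨bal s t, [terminal a, nonterminal (bal (step s a) t)]⟩
  | balPair s r t a b => ⟨bal s t, [terminal a, nonterminal (bal (step s a) r),
      terminal b, nonterminal (bal (step r b) t)]⟩
  | nonnegBal ε s t => ⟨nonneg ε s, [nonterminal (bal s t)]⟩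
  | nonnegPos ε s => ⟨nonneg ε s, [nonterminal (pos ε s)]⟩
  | posStep ε s t a => ⟨pos ε s, [nonterminal (bal s t), terminal a,
      nonterminal (nonneg ε (step t a))]⟩
  | zeroBal s t => ⟨zero s, [nonterminal (bal s t)]⟩
  | nonzeroPos ε s => ⟨nonzero s, [nonterminal (pos ε s)]⟩

def RuleLabel.IsValid : RuleLabel S T → Prop
  | balSkip s _ a => w s a = 0
  | balPair s r _ a b => w s a + w r b = 0
  | posStep ε _ t a => ε * w t a = 1
  | _ => True

instance : DecidablePred (RuleLabel.IsValid (T := T) w) := fun l => by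
  cases l <;> unfold RuleLabel.IsValid <;> infer_instance

abbrev grammar [Fintype S] [Fintype T] [DecidableEq S] [DecidableEq T] (n : Nonterminal S) :
    ContextFreeGrammar T where
  NT := Nonterminal S
  initial := n
  rules := ({l | l.IsValid w} : Finset (RuleLabel S T)).image (RuleLabel.rule step)

def semantics : Nonterminal S → Language T
  | bal s t => {z | weightFrom step w s z = 0 ∧ z.foldl step s = t}
  | nonneg ε s => {z | 0 ≤ ε * weightFrom step w s z}
  | pos ε s => {z | 0 < ε * weightFrom step w s z}
  | zero s => {z | weightFrom step w s z = 0}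
  | nonzero s => {z | weightFrom step w s z ≠ 0}

section
variable {z : List T} {s t : S} {ε : ℤˣ}

@[simp] lemma mem_semantics_bal :
    z ∈ semantics step w (bal s t) ↔ weightFrom step w s z = 0 ∧ z.foldl step s = t := Iff.rfl

@[simp] lemma mem_semantics_nonneg :
    z ∈ semantics step w (nonneg ε s) ↔ 0 ≤ ε * weightFrom step w s z := Iff.rfl

@[simp] lemma mem_semantics_pos :
    z ∈ semantics step w (pos ε s) ↔ 0 < ε * weightFrom step w s z := Iff.rfl

@[simp] lemma mem_semantics_zero : z ∈ semantics step w (zero s) ↔ weightFrom step w s z = 0 :=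
  Iff.rfl

@[simp] lemma mem_semantics_nonzero :
    z ∈ semantics step w (nonzero s) ↔ weightFrom step w s z ≠ 0 := Iff.rfl

end

lemma listLanguage_output_le (l : RuleLabel S T) (hl : l.IsValid w) :
    listLanguage (semantics step w) (l.rule step).output ≤
      semantics step w (l.rule step).input := by
  intro z (hz : z ∈ (_ : Language T))
  show z ∈ (_ : Language T)
  rcases l with s | ⟨s, t, a⟩ | ⟨s, r, t, a, b⟩ | ⟨ε, s, t⟩ | ⟨ε, s⟩ | ⟨ε, s, t, a⟩ | ⟨s, t⟩ |
      ⟨ε, s⟩ <;>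
    simp only [RuleLabel.rule, RuleLabel.IsValid, listLanguage_cons, listLanguage_nil,
      Symbol.language, mul_one, Language.mem_mul, Language.mem_one, mem_semantics_bal,
      mem_semantics_nonneg, mem_semantics_pos] at hz hl ⊢
  case balNil => simp [hz]
  case balSkip =>
    obtain ⟨_, rfl, u, ⟨hu, rfl⟩, rfl⟩ := hz
    simp [hl, hu]
  case balPair =>
    obtain ⟨_, rfl, _, ⟨u, ⟨hu, rfl⟩, _, ⟨_, rfl, v, ⟨hv, rfl⟩, rfl⟩, rfl⟩, rfl⟩ := hz
    simp [hu, hv, hl]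
  case nonnegBal => simp [hz.1]
  case nonnegPos => exact hz.le
  case posStep =>
    obtain ⟨u, ⟨hu, rfl⟩, _, ⟨_, rfl, v, hv, rfl⟩, rfl⟩ := hz
    simp [hu, mul_add, hl]
    omega
  case zeroBal => exact hz.1
  case nonzeroPos => exact fun h => by simp [h] at hz

section Completeness

variable [Fintype S] [Fintype T] [DecidableEq S] [DecidableEq T]

lemma language_grammar_le (n : Nonterminal S) :
    (grammar step w n).language ≤ semantics step w n :=
  ContextFreeGrammar.language_le_of_rules fun _ hr => by
    obtain ⟨l, hl, rfl⟩ := Finset.mem_image.1 hr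
    exact listLanguage_output_le step w l (Finset.mem_filter.1 hl).2

lemma derives_rule (n₀ : Nonterminal S) {l : RuleLabel S T} (hl : l.IsValid w) :
    (grammar step w n₀).Derives [nonterminal (l.rule step).input] (l.rule step).output :=
  ContextFreeGrammar.Produces.single ⟨_, Finset.mem_image_of_mem _ (by simpa using hl),
    ContextFreeRule.Rewrites.input_output⟩

variable {step w}

open ContextFreeGrammar in
theorem derives_bal (hw : ∀ s a, |w s a| ≤ 1) (n₀ : Nonterminal S) (s : S) (z : List T)
    (h : weightFrom step w s z = 0) :
    (grammar step w n₀).Derives [nonterminal (bal s (z.foldl step s))] (z.map terminal) := by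
  match z with
  | [] => exact derives_rule step w n₀ (l := balNil s) trivial
  | a :: z =>
    by_cases ha : w s a = 0
    · have dz := derives_bal hw n₀ (step s a) z (by simpa [ha] using h)
      exact (derives_rule step w n₀ (l := balSkip s _ a) ha).trans
        ((Derives.refl [terminal a]).append dz)
    · -- the running weight returns to `0` right after some letter `b` of weight `-w s a`
      obtain ⟨ε, hε⟩ : ∃ ε : ℤˣ, ε * w s a = -1 := by
        rcases (show w s a = 1 ∨ w s a = -1 by have := abs_le.1 (hw s a); omega) with h1 | h1
        exacts [⟨-1, by simp [h1]⟩, ⟨1, by simp [h1]⟩]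
      have hz : 0 < ε * weightFrom step w (step s a) z := by
        rw [weightFrom_cons] at h
        rcases Int.units_eq_one_or ε with rfl | rfl <;> simp at hε ⊢ <;> omega
      obtain ⟨u, b, v, rfl, hu, hb⟩ := exists_eq_append_cons_of_pos hw ε hz
      have hab : w s a + w (u.foldl step (step s a)) b = 0 := by
        rcases Int.units_eq_one_or ε with rfl | rfl <;> simp at hε hb <;> omega
      have hv : weightFrom step w (step (u.foldl step (step s a)) b) v = 0 := by
        simp [hu] at h; omega
      have du := derives_bal hw n₀ (step s a) u hu
      have dv := derives_bal hw n₀ (step (u.foldl step (step s a)) b) v hv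
      refine (derives_rule step w n₀ (l := balPair s _ _ a b) hab).trans ?_
      simpa [RuleLabel.rule] using
        (((Derives.refl [terminal a]).append du).append (Derives.refl [terminal b])).append dv
termination_by z.length

mutual

theorem derives_nonneg (hw : ∀ s a, |w s a| ≤ 1) (n₀ : Nonterminal S) (ε : ℤˣ) (s : S)
    (z : List T) (h : 0 ≤ ε * weightFrom step w s z) :
    (grammar step w n₀).Derives [nonterminal (nonneg ε s)] (z.map terminal) := by
  rcases h.eq_or_lt with h | h
  · exact (derives_rule step w n₀ (l := nonnegBal ε s (z.foldl step s)) trivial).trans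
      (derives_bal hw n₀ s z (by simpa using h.symm))
  · exact (derives_rule step w n₀ (l := nonnegPos ε s) trivial).trans
      (derives_pos hw n₀ ε s z h)
termination_by 2 * z.length + 1

theorem derives_pos (hw : ∀ s a, |w s a| ≤ 1) (n₀ : Nonterminal S) (ε : ℤˣ) (s : S)
    (z : List T) (h : 0 < ε * weightFrom step w s z) :
    (grammar step w n₀).Derives [nonterminal (pos ε s)] (z.map terminal) := by
  obtain ⟨u, a, v, rfl, hu, ha⟩ := exists_eq_append_cons_of_pos hw ε h
  have hv : 0 ≤ ε * weightFrom step w (step (u.foldl step s) a) v := by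
    simp [hu, mul_add, ha] at h; omega
  refine (derives_rule step w n₀ (l := posStep ε s (u.foldl step s) a) ha).trans ?_
  simpa [RuleLabel.rule] using ((derives_bal hw n₀ s u hu).append
    (ContextFreeGrammar.Derives.refl [terminal a])).append (derives_nonneg hw n₀ ε _ v hv)
termination_by 2 * z.length
decreasing_by subst_vars; simp; omega

end

theorem semantics_le_language (hw : ∀ s a, |w s a| ≤ 1) (n : Nonterminal S) :
    semantics step w n ≤ (grammar step w n).language := by
  intro z (hz : z ∈ (_ : Language T))
  apply (ContextFreeGrammar.mem_language_iff _ z).2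
  cases n with
  | bal s t =>
    obtain ⟨h, rfl⟩ := hz
    exact derives_bal hw _ s z h
  | nonneg ε s => exact derives_nonneg hw _ ε s z hz
  | pos ε s => exact derives_pos hw _ ε s z hz
  | zero s =>
    exact (derives_rule step w _ (l := zeroBal s (z.foldl step s)) trivial).trans
      (derives_bal hw _ s z hz)
  | nonzero s =>
    obtain ⟨ε, hε⟩ : ∃ ε : ℤˣ, 0 < ε * weightFrom step w s z := by
      rcases (mem_semantics_nonzero step w).1 hz |>.lt_or_gt with h | h
      exacts [⟨-1, by simpa using h⟩, ⟨1, by simpa using h⟩]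
    exact (derives_rule step w _ (l := nonzeroPos ε s) trivial).trans
      (derives_pos hw _ ε s z hε)

end Completeness

theorem isContextFree_semantics {S T : Type} [Finite S] [Finite T] {step : S → T → S}
    {w : S → T → ℤ} (hw : ∀ s a, |w s a| ≤ 1) (n : Nonterminal S) :
    (semantics step w n).IsContextFree := by
  classical
  cases nonempty_fintype S
  cases nonempty_fintype T
  exact ⟨grammar step w n,
    le_antisymm (language_grammar_le step w n) (semantics_le_language hw n)⟩

end CounterGrammar

lemma List.prefix_cons_take_iff {α : Type*} {x : List α} {m : ℕ} (hx : x.length ≤ m + 1)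
    (a : α) (z : List α) : x <+: a :: z.take m ↔ x <+: a :: z := by
  rw [← List.take_succ_cons, List.prefix_take_iff, and_iff_left hx]

section OccurrenceCounting

variable {α : Type}

def prefixStep (m : ℕ) (s : {l : List α // l.length ≤ m}) (a : α) :
    {l : List α // l.length ≤ m} :=
  ⟨(a :: s.1).take m, List.length_take_le _ _⟩

@[simp] lemma prefixStep_val (m : ℕ) (s : {l : List α // l.length ≤ m}) (a : α) :
    (prefixStep m s a).1 = (a :: s.1).take m := rfl

lemma foldl_prefixStep_reverse (m : ℕ) (z : List α) :
    (z.reverse.foldl (prefixStep m) ⟨[], Nat.zero_le m⟩).1 = z.take m := by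
  induction z with
  | nil => simp
  | cons a z ih =>
    rw [List.reverse_cons, List.foldl_append, List.foldl_cons, List.foldl_nil, prefixStep_val, ih]
    cases m <;> simp [List.take_take]

variable [DecidableEq α]

lemma occCount_cons (x z : List α) (a : α) :
    occCount x (a :: z) = occCount x z + if x <+: a :: z then 1 else 0 := by
  rw [occCount, occCount, ← List.countP_eq_length_filter, ← List.countP_eq_length_filter,
    List.length_cons, List.range_succ_eq_map, List.countP_cons, List.countP_map]
  simp [Function.comp_def]

lemma occCount_nil {x : List α} (hx : x ≠ []) : occCount x [] = 0 := by
  simp [occCount, hx]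

def occDiffWeight (x y : List α) (m : ℕ) (s : {l : List α // l.length ≤ m}) (a : α) : ℤ :=
  (if y <+: a :: s.1 then 1 else 0) - (if x <+: a :: s.1 then 1 else 0)

lemma abs_occDiffWeight_le (x y : List α) (m : ℕ) (s : {l : List α // l.length ≤ m}) (a : α) :
    |occDiffWeight x y m s a| ≤ 1 := by
  unfold occDiffWeight
  split_ifs <;> simp

lemma weightFrom_reverse {x y : List α} (hx : x ≠ []) (hy : y ≠ []) {m : ℕ}
    (hxm : x.length ≤ m + 1) (hym : y.length ≤ m + 1) (z : List α) :
    weightFrom (prefixStep m) (occDiffWeight x y m) ⟨[], Nat.zero_le m⟩ z.reverse =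
      occCount y z - occCount x z := by
  induction z with
  | nil => simp [occCount_nil hx, occCount_nil hy]
  | cons a z ih =>
    rw [List.reverse_cons, weightFrom_append, ih, weightFrom_cons, weightFrom_nil, occDiffWeight,
      foldl_prefixStep_reverse]
    simp only [List.prefix_cons_take_iff hxm, List.prefix_cons_take_iff hym, occCount_cons]
    push_cast
    ring

end OccurrenceCounting

theorem stmt_0 {α : Type} [Fintype α] [DecidableEq α] (x y : List α)
    (hx : x ≠ []) (hy : y ≠ []) :
    Language.IsContextFree ({z : List α | occCount x z < occCount y z} : Language α) ∧
    Language.IsContextFree ({z : List α | occCount x z ≤ occCount y z} : Language α) ∧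
    Language.IsContextFree ({z : List α | occCount x z = occCount y z} : Language α) ∧
    Language.IsContextFree ({z : List α | occCount x z ≥ occCount y z} : Language α) ∧
    Language.IsContextFree ({z : List α | occCount x z > occCount y z} : Language α) ∧
    Language.IsContextFree ({z : List α | occCount x z ≠ occCount y z} : Language α) := by
  set m := max x.length y.length
  have : Finite {l : List α // l.length ≤ m} := (List.finite_length_le α m).to_subtype
  have hrev := weightFrom_reverse hx hy (m := m) (by omega) (by omega)
  set s₀ : {l : List α // l.length ≤ m} := ⟨[], Nat.zero_le m⟩
  have key : ∀ (n : CounterGrammar.Nonterminal {l : List α // l.length ≤ m})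
      (P : List α → Prop),
      (∀ z, P z ↔ z.reverse ∈ CounterGrammar.semantics (prefixStep m) (occDiffWeight x y m) n) →
      Language.IsContextFree {z | P z} := fun n P hP => by
    rw [show ({z | P z} : Language α) = _ from Set.ext hP]
    exact (CounterGrammar.isContextFree_semantics (abs_occDiffWeight_le x y m) n).reverse
  refine ⟨key (.pos 1 s₀) _ fun z => ?_, key (.nonneg 1 s₀) _ fun z => ?_,
    key (.zero s₀) _ fun z => ?_, key (.nonneg (-1) s₀) _ fun z => ?_,
    key (.pos (-1) s₀) _ fun z => ?_, key (.nonzero s₀) _ fun z => ?_⟩ <;>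
  simp [hrev] <;> omega
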